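/- Let V be a finite-dimensional real inner product space, S : V → V a symmetric positive semidefinite linear map, b ∈ V, and for ε > 0 define I_ε(v) = ½⟪Sv, v⟫ − ⟪b, v⟫ + (1/(2ε²))‖P(v)‖², where P : V → V is defined componentwise (with respect to an orthonormal basis) by taking negative parts, P(v)_i = min(v_i − χ_i, 0) for fixed χ ∈ V. Suppose u_ε minimizes I_ε and u minimizes I(v) = ½⟪Sv, v⟫ − ⟪b, v⟫ over K = {v : v_i ≥ χ_i for all i}. Then ½⟪S u_ε, u_ε⟫ + (ε²/2)‖λ_ε‖² ≤ ½⟪S u, u⟫ + ⟪b, u_ε − u⟫, where λ_ε = ε⁻²·P(u_ε). -/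

import Mathlib

open scoped RealInnerProductSpace

theorem penalization_energy_bound (n : ℕ)
    (S : EuclideanSpace ℝ (Fin n) →ₗ[ℝ] EuclideanSpace ℝ (Fin n))
    (hsym : ∀ v w, ⟪S v, w⟫ = ⟪v, S w⟫) (hpsd : ∀ v, 0 ≤ ⟪S v, v⟫)
    (b χ : EuclideanSpace ℝ (Fin n)) (ε : ℝ) (hε : 0 < ε)
    (P : EuclideanSpace ℝ (Fin n) → EuclideanSpace ℝ (Fin n))
    (hP : ∀ v i, P v i = min (v i - χ i) 0)
    (Iε I : EuclideanSpace ℝ (Fin n) → ℝ)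
    (hIε : ∀ v, Iε v = (1 / 2) * ⟪S v, v⟫ - ⟪b, v⟫ + (1 / (2 * ε ^ 2)) * ‖P v‖ ^ 2)
    (hI : ∀ v, I v = (1 / 2) * ⟪S v, v⟫ - ⟪b, v⟫)
    (uε u : EuclideanSpace ℝ (Fin n))
    (huε : ∀ v, Iε uε ≤ Iε v)
    (hu : u ∈ {v : EuclideanSpace ℝ (Fin n) | ∀ i, χ i ≤ v i})
    (hmin : ∀ v ∈ {v : EuclideanSpace ℝ (Fin n) | ∀ i, χ i ≤ v i}, I u ≤ I v)
    (lamε : EuclideanSpace ℝ (Fin n)) (hlam : lamε = ε⁻¹ ^ 2 • P uε) :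
    (1 / 2) * ⟪S uε, uε⟫ + (ε ^ 2 / 2) * ‖lamε‖ ^ 2
      ≤ (1 / 2) * ⟪S u, u⟫ + ⟪b, uε - u⟫ := by
  have hPu : P u = 0 := by
    ext i
    simp [hP u i, min_eq_right, sub_nonneg.mpr (hu i)]
  have key := huε u
  rw [hIε, hIε, hPu] at key
  simp only [norm_zero] at key
  have hlamnorm : ‖lamε‖ ^ 2 = (ε⁻¹ ^ 2) ^ 2 * ‖P uε‖ ^ 2 := by
    rw [hlam, norm_smul]
    simp [mul_pow, abs_of_nonneg (sq_nonneg ε⁻¹)]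
  have hε2 : ε ^ 2 ≠ 0 := pow_ne_zero 2 hε.ne'
  have h1 : (ε ^ 2 / 2) * ‖lamε‖ ^ 2 = (1 / (2 * ε ^ 2)) * ‖P uε‖ ^ 2 := by
    rw [hlamnorm]
    field_simp
  have hb : ⟪b, uε - u⟫ = ⟪b, uε⟫ - ⟪b, u⟫ := inner_sub_right b uε u
  rw [h1, hb]
  linarith [key]
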